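/- arXiv:1609.04182 — 4 statements merged into one kernel-verified Lean document; each statement's English description precedes it below -/
import Mathlib

section
/- Let T be a finite tree and k ≥ 1. The map sending an unordered pair of vertices {x,y} with d(x,y) = k to the pair {e_x, e_y}, where e_x (resp. e_y) is the edge of the unique x–y path incident to x (resp. y), is a well-defined bijection from the set of unordered vertex pairs at distance k onto the set of unordered edge pairs at distance k−1 (edge distance measured in the line graph). -/
/-!
In a tree the path from `x` to `y` is the unique geodesic. The chain of its edges is a walk of
length `d(x, y) - 1` in the line graph between its two end edges, while conversely an endpoint
of `e` and an endpoint of `f` are never farther apart than `d_L(e, f) + 1`; hence the end edges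
are at line-graph distance exactly `d(x, y) - 1`. Conversely, for edges `e ≠ f` take the closest
endpoints `x' ∈ e`, `y' ∈ f` and the far endpoints `x`, `y`: the walk `x x' ⋯ y' y` is a path,
hence the geodesic, so `{e, f}` is the pair of end edges of `{x, y}`, and `{x, y}` is recovered
as the only pair of endpoints at distance `d_L(e, f) + 1`.
-/

open SimpleGraph Polynomial Finset

/-- Distance between vertices, as a function on unordered pairs. -/
noncomputable def sdist {V : Type*} (G : SimpleGraph V) (p : Sym2 V) : ℕ :=
  Sym2.lift ⟨G.dist, fun _ _ => SimpleGraph.dist_comm⟩ p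

/-- The Hosoya polynomial `H(G,x) = Σ_{k≥0} d(G,k) x^k`, where `d(G,k)` counts
unordered pairs of vertices at distance `k` (so `d(G,0) = |V(G)|`). -/
noncomputable def hosoyaPoly {V : Type*} [Fintype V] [DecidableEq V]
    (G : SimpleGraph V) : Polynomial ℝ :=
  ∑ p : Sym2 V, X ^ sdist G p

/-- The edge-Hosoya polynomial, summing over unordered pairs of edges with the
line-graph distance. -/
noncomputable def edgeHosoyaPoly {V : Type*} [Fintype V] [DecidableEq V]
    (G : SimpleGraph V) [DecidableRel G.Adj] : Polynomial ℝ :=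
  ∑ p : Sym2 G.edgeSet, X ^ sdist G.lineGraph p

/-- The Wiener index: sum of distances over unordered pairs of vertices. -/
noncomputable def wienerIndex {V : Type*} [Fintype V] [DecidableEq V]
    (G : SimpleGraph V) : ℕ :=
  ∑ p : Sym2 V, sdist G p

/-- The edge-Wiener index: sum of line-graph distances over unordered pairs of edges. -/
noncomputable def edgeWienerIndex {V : Type*} [Fintype V] [DecidableEq V]
    (G : SimpleGraph V) [DecidableRel G.Adj] : ℕ :=
  ∑ p : Sym2 G.edgeSet, sdist G.lineGraph p

/-- The hyper-Wiener index. -/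
noncomputable def hyperWiener {V : Type*} [Fintype V] [DecidableEq V]
    (G : SimpleGraph V) : ℝ :=
  (1/2) * ∑ p : Sym2 V, (sdist G p : ℝ) + (1/2) * ∑ p : Sym2 V, (sdist G p : ℝ)^2

/-- The edge-hyper-Wiener index. -/
noncomputable def edgeHyperWiener {V : Type*} [Fintype V] [DecidableEq V]
    (G : SimpleGraph V) [DecidableRel G.Adj] : ℝ :=
  (1/2) * ∑ p : Sym2 G.edgeSet, (sdist G.lineGraph p : ℝ) +
  (1/2) * ∑ p : Sym2 G.edgeSet, (sdist G.lineGraph p : ℝ)^2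

lemma Relator.BiTotal.exists_equiv_of_biUnique {α β : Type*} {R : α → β → Prop}
    (hR : Relator.BiTotal R) (hU : Relator.BiUnique R) : ∃ e : α ≃ β, ∀ a, R a (e a) := by
  choose f hf using hR.1
  refine ⟨Equiv.ofBijective f ⟨fun a a' h => hU.1 (hf a) (h ▸ hf a'), fun b => ?_⟩, hf⟩
  obtain ⟨a, ha⟩ := hR.2 b
  exact ⟨a, hU.2 (hf a) ha⟩

namespace SimpleGraph

variable {V : Type*} {G : SimpleGraph V}

lemma exists_adj_dist_add_one_eq {x y : V} (h : G.dist x y ≠ 0) :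
    ∃ x', G.Adj x x' ∧ G.dist x' y + 1 = G.dist x y := by
  obtain ⟨p, hp⟩ := exists_walk_of_dist_ne_zero h
  have hnil : ¬ p.Nil := fun hn => h (by rw [← hp, hn.length_eq_zero])
  refine ⟨p.snd, p.adj_snd hnil, le_antisymm ?_ ?_⟩
  · have := p.length_tail_add_one hnil
    have := dist_le p.tail
    omega
  · have := (p.adj_snd hnil).reachable.dist_triangle_left y
    rw [dist_eq_one_iff_adj.mpr (p.adj_snd hnil)] at this
    omega

lemma Walk.dist_add_dist_le_length {u v w : V} (p : G.Walk u v) (hw : w ∈ p.support) :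
    G.dist u w + G.dist w v ≤ p.length := by
  classical
  rw [← p.take_spec hw, Walk.length_append]
  exact add_le_add (dist_le _) (dist_le _)

lemma exists_adj_eq_of_mem_edge (e : G.edgeSet) {v : V} (hv : v ∈ (e : Sym2 V)) :
    ∃ (u : V) (h : G.Adj u v), e = ⟨s(u, v), G.mem_edgeSet.mpr h⟩ := by
  have he : s(Sym2.Mem.other hv, v) = e := Sym2.eq_swap.trans (Sym2.other_spec hv)
  exact ⟨_, G.mem_edgeSet.mp (he.symm ▸ e.2), Subtype.ext he.symm⟩

lemma exists_mem_mem_dist_le (e f : Sym2 V) :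
    ∃ a ∈ e, ∃ b ∈ f, ∀ a' ∈ e, ∀ b' ∈ f, G.dist a b ≤ G.dist a' b' := by
  classical
  obtain ⟨⟨a, b⟩, hab, hmin⟩ := (e.toFinset ×ˢ f.toFinset).exists_min_image
    (fun p => G.dist p.1 p.2)
    ⟨(e.out.1, f.out.1), by simp [Sym2.mem_toFinset, Sym2.out_fst_mem]⟩
  simp only [Finset.mem_product, Sym2.mem_toFinset] at hab hmin
  exact ⟨a, hab.1, b, hab.2, fun a' ha' b' hb' => hmin (a', b') ⟨ha', hb'⟩⟩

lemma dist_le_dist_add_one_of_mem_edge (e : G.edgeSet) {a c : V} (ha : a ∈ (e : Sym2 V))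
    (hc : c ∈ (e : Sym2 V)) (b : V) : G.dist a b ≤ G.dist c b + 1 := by
  obtain ⟨e, he⟩ := e
  induction e using Sym2.ind with
  | _ u v =>
    rw [mem_edgeSet] at he
    have key {x y : V} (hxy : G.Adj x y) : G.dist x b ≤ G.dist y b + 1 := by
      simpa [dist_eq_one_iff_adj.mpr hxy, add_comm] using hxy.reachable.dist_triangle_left b
    rcases Sym2.mem_iff.mp ha with rfl | rfl <;> rcases Sym2.mem_iff.mp hc with rfl | rfl
    exacts [by omega, key he, key he.symm, by omega]

lemma dist_le_length_add_one_of_lineGraph_walk {e f : G.edgeSet} (w : G.lineGraph.Walk e f)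
    {a b : V} (ha : a ∈ (e : Sym2 V)) (hb : b ∈ (f : Sym2 V)) :
    G.dist a b ≤ w.length + 1 := by
  induction w generalizing a with
  | nil => simpa using dist_le_dist_add_one_of_mem_edge _ ha hb b
  | @cons e _ _ hadj w ih =>
    obtain ⟨-, c, hce, hcf⟩ := lineGraph_adj_iff_exists.mp hadj
    have := dist_le_dist_add_one_of_mem_edge e ha hce b
    have := ih hcf hb
    rw [Walk.length_cons]
    omega

lemma exists_lineGraph_walk_of_isTrail {a b c d : V} (hab : G.Adj a b) (p : G.Walk b c)
    (hcd : G.Adj c d) (h : (Walk.cons hab (p.concat hcd)).IsTrail) :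
    ∃ w : G.lineGraph.Walk ⟨s(a, b), G.mem_edgeSet.mpr hab⟩
      ⟨s(c, d), G.mem_edgeSet.mpr hcd⟩, w.length = p.length + 1 := by
  induction p generalizing a with
  | @nil b =>
    have hne : s(a, b) ≠ s(b, d) := by simpa [Walk.concat_nil] using h
    refine ⟨.cons (lineGraph_adj_iff_exists.mpr ⟨?_, b, by simp, by simp⟩) .nil, by simp⟩
    exact fun h => hne (congrArg Subtype.val h)
  | @cons b b' c hbb' p ih =>
    rw [Walk.concat_cons, Walk.isTrail_cons] at h
    obtain ⟨w, hw⟩ := ih hbb' hcd h.1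
    have hne : s(a, b) ≠ s(b, b') := fun heq => h.2 (heq ▸ by simp)
    refine ⟨.cons (lineGraph_adj_iff_exists.mpr ⟨?_, b, by simp, by simp⟩) w, ?_⟩
    · exact fun h => hne (congrArg Subtype.val h)
    · simp [hw]

lemma lineGraph_dist_eq_of_isTrail {a b c d : V} (hab : G.Adj a b) (p : G.Walk b c)
    (hcd : G.Adj c d) (h : (Walk.cons hab (p.concat hcd)).IsTrail)
    (had : G.dist a d = p.length + 2) :
    G.lineGraph.dist ⟨s(a, b), G.mem_edgeSet.mpr hab⟩ ⟨s(c, d), G.mem_edgeSet.mpr hcd⟩ =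
      p.length + 1 := by
  obtain ⟨w, hw⟩ := exists_lineGraph_walk_of_isTrail hab p hcd h
  obtain ⟨w', hw'⟩ := w.reachable.exists_walk_length_eq_dist
  have := dist_le_length_add_one_of_lineGraph_walk w' (a := a) (b := d) (by simp) (by simp)
  have := dist_le w
  omega

lemma IsTree.length_eq_dist_of_isPath (hG : G.IsTree) {u v : V} {p : G.Walk u v}
    (hp : p.IsPath) : p.length = G.dist u v := by
  obtain ⟨q, hq, hl⟩ := hG.connected.exists_path_of_dist u v
  rw [← hl, (hG.existsUnique_path u v).unique hp hq]

lemma IsTree.eq_of_adj_of_dist_add_one_eq (hG : G.IsTree) {x y a b : V} (ha : G.Adj x a)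
    (hb : G.Adj x b) (ha' : G.dist a y + 1 = G.dist x y) (hb' : G.dist b y + 1 = G.dist x y) :
    a = b := by
  have geodesic {c : V} (hc : G.Adj x c) (hc' : G.dist c y + 1 = G.dist x y) :
      ∃ r : G.Walk x y, r.IsPath ∧ r.snd = c := by
    obtain ⟨r, -, hr⟩ := hG.connected.exists_path_of_dist c y
    exact ⟨.cons hc r, Walk.isPath_of_length_eq_dist _ (by simp [hr, hc']), by simp⟩
  obtain ⟨r, hr, rfl⟩ := geodesic ha ha'
  obtain ⟨r', hr', rfl⟩ := geodesic hb hb'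
  rw [(hG.existsUnique_path x y).unique hr hr']

lemma IsTree.dist_add_two_eq_of_dist_add_one_eq (hG : G.IsTree) {x y x' y' : V} (hx : G.Adj x x')
    (hy : G.Adj y y') (hx' : G.dist x' y + 1 = G.dist x y) (hy' : G.dist y' x + 1 = G.dist x y)
    (h2 : 2 ≤ G.dist x y) : G.dist x' y' + 2 = G.dist x y := by
  rw [dist_comm] at hy'
  obtain ⟨z, hz, hzy'⟩ := exists_adj_dist_add_one_eq (G := G) (x := x) (y := y') (by omega)
  -- the vertex after `x` towards `y'` is also the vertex after `x` towards `y`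
  have hzy : G.dist z y + 1 = G.dist x y := by
    have hxz : G.dist x z = 1 := dist_eq_one_iff_adj.mpr hz
    have hy'y : G.dist y' y = 1 := dist_eq_one_iff_adj.mpr hy.symm
    have := hG.connected.dist_triangle (u := z) (v := y') (w := y)
    have := hG.connected.dist_triangle (u := x) (v := z) (w := y)
    omega
  rw [← hG.eq_of_adj_of_dist_add_one_eq hz hx hzy hx']
  omega

lemma IsTree.dist_eq_add_two_of_dist_eq_add_one (hG : G.IsTree) {x y x' y' : V} (hx : G.Adj x x')
    (hy : G.Adj y y') (hne : s(x, x') ≠ s(y, y'))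
    (hxy' : G.dist x y' = G.dist x' y' + 1) (hx'y : G.dist x' y = G.dist x' y' + 1) :
    G.dist x y = G.dist x' y' + 2 := by
  obtain ⟨P, hP, hPl⟩ := hG.connected.exists_path_of_dist x' y'
  have hxP : x ∉ P.support := fun h => by
    have := P.dist_add_dist_le_length h
    rw [dist_eq_one_iff_adj.mpr hx.symm] at this
    omega
  have hyP : y ∉ P.support := fun h => by
    have := P.dist_add_dist_le_length h
    rw [dist_eq_one_iff_adj.mpr hy] at this
    omega
  have hxy : x ≠ y := by
    rintro rfl
    rw [dist_eq_one_iff_adj.mpr hy] at hxy'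
    have : x' = y' := hG.connected.dist_eq_zero_iff.mp (by omega)
    exact hne (by rw [this])
  have hW : (Walk.cons hx (P.concat hy.symm)).IsPath := by
    refine (hP.concat hyP hy.symm).cons ?_
    simpa [Walk.support_concat, hxy] using hxP
  simpa [hPl] using (hG.length_eq_dist_of_isPath hW).symm

/-- In a tree, `x'` is the second and `y'` the penultimate vertex of the `x`–`y` path, so `q` is
the pair of end edges of that path. -/
def IsEndEdgePair (G : SimpleGraph V) (p : Sym2 V) (q : Sym2 G.edgeSet) : Prop :=
  ∃ (x y x' y' : V) (hx : G.Adj x x') (hy : G.Adj y y'), p = s(x, y) ∧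
    G.dist x' y + 1 = G.dist x y ∧ G.dist y' x + 1 = G.dist x y ∧
    q = s(⟨s(x, x'), G.mem_edgeSet.mpr hx⟩, ⟨s(y, y'), G.mem_edgeSet.mpr hy⟩)

lemma exists_isEndEdgePair {p : Sym2 V} (hp : sdist G p ≠ 0) : ∃ q, G.IsEndEdgePair p q := by
  induction p using Sym2.ind with
  | _ x y =>
    obtain ⟨x', hx, hx'⟩ := exists_adj_dist_add_one_eq hp
    obtain ⟨y', hy, hy'⟩ := exists_adj_dist_add_one_eq (G := G) (x := y) (y := x)
      (by rwa [dist_comm])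
    exact ⟨_, x, y, x', y', hx, hy, rfl, hx', by rwa [dist_comm (u := y)] at hy', rfl⟩

lemma isEndEdgePair_of_adj {x x' : V} (hx : G.Adj x x') :
    G.IsEndEdgePair s(x, x')
      s(⟨s(x, x'), G.mem_edgeSet.mpr hx⟩, ⟨s(x', x), G.mem_edgeSet.mpr hx.symm⟩) := by
  have hxx' : G.dist x x' = 1 := dist_eq_one_iff_adj.mpr hx
  exact ⟨x, x', x', x, hx, hx.symm, rfl, by simp [hxx'], by simp [hxx'], rfl⟩

lemma IsTree.sdist_lineGraph_add_one_of_isEndEdgePair (hG : G.IsTree) {p : Sym2 V}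
    {q : Sym2 G.edgeSet} (h : G.IsEndEdgePair p q) : sdist G.lineGraph q + 1 = sdist G p := by
  obtain ⟨x, y, x', y', hx, hy, rfl, hx', hy', rfl⟩ := h
  change G.lineGraph.dist _ _ + 1 = G.dist x y
  have hyy' : (⟨s(y, y'), G.mem_edgeSet.mpr hy⟩ : G.edgeSet) =
      ⟨s(y', y), G.mem_edgeSet.mpr hy.symm⟩ := Subtype.ext Sym2.eq_swap
  rw [hyy']
  by_cases h2 : 2 ≤ G.dist x y
  · obtain ⟨P, -, hPl⟩ := hG.connected.exists_path_of_dist x' y'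
    have hin := hG.dist_add_two_eq_of_dist_add_one_eq hx hy hx' hy' h2
    have hW : (Walk.cons hx (P.concat hy.symm)).IsPath :=
      Walk.isPath_of_length_eq_dist _ (by simp [hPl, ← hin])
    rw [lineGraph_dist_eq_of_isTrail hx P hy.symm hW.isTrail (by omega)]
    omega
  · have hx'y : x' = y := hG.connected.dist_eq_zero_iff.mp (by omega)
    have hy'x : y' = x := hG.connected.dist_eq_zero_iff.mp (by omega)
    subst hx'y hy'x
    rw [dist_self]
    omega

lemma IsTree.isEndEdgePair_rightUnique (hG : G.IsTree) : Relator.RightUnique G.IsEndEdgePair := by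
  intro p q q' h h'
  obtain ⟨x, y, x', y', hx, hy, rfl, hx', hy', rfl⟩ := h
  obtain ⟨u, v, u', v', hu, hv, hp, hu', hv', rfl⟩ := h'
  rcases Sym2.eq_iff.mp hp with ⟨rfl, rfl⟩ | ⟨rfl, rfl⟩
  · rw [dist_comm (u := x) (v := y)] at hy' hv'
    obtain rfl := hG.eq_of_adj_of_dist_add_one_eq hx hu hx' hu'
    obtain rfl := hG.eq_of_adj_of_dist_add_one_eq hy hv hy' hv'
    rfl
  · rw [dist_comm (u := x) (v := y)] at hy'
    rw [dist_comm (u := y) (v := x)] at hv'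
    obtain rfl := hG.eq_of_adj_of_dist_add_one_eq hx hv hx' hv'
    obtain rfl := hG.eq_of_adj_of_dist_add_one_eq hy hu hy' hu'
    exact Sym2.eq_swap

lemma IsTree.eq_of_mem_of_mem_of_dist_eq (hG : G.IsTree) {x y x' y' a b : V} (hx : G.Adj x x')
    (hy : G.Adj y y') (hx' : G.dist x' y + 1 = G.dist x y) (hy' : G.dist y' x + 1 = G.dist x y)
    (ha : a ∈ s(x, x')) (hb : b ∈ s(y, y')) (hab : G.dist a b = G.dist x y) :
    s(a, b) = s(x, y) := by
  rw [dist_comm (u := y')] at hy'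
  rcases Sym2.mem_iff.mp ha with rfl | rfl <;> rcases Sym2.mem_iff.mp hb with rfl | rfl
  · rfl
  · omega
  · omega
  · by_cases h2 : 2 ≤ G.dist x y
    · have := hG.dist_add_two_eq_of_dist_add_one_eq hx hy hx' (by rwa [dist_comm]) h2
      omega
    · have hx'y : a = y := hG.connected.dist_eq_zero_iff.mp (by omega)
      have hy'x : x = b := hG.connected.dist_eq_zero_iff.mp (by omega)
      rw [hx'y, hy'x, Sym2.eq_swap]

lemma IsTree.isEndEdgePair_leftUnique (hG : G.IsTree) : Relator.LeftUnique G.IsEndEdgePair := by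
  intro p p' q h h'
  have hdist := (hG.sdist_lineGraph_add_one_of_isEndEdgePair h).symm.trans
    (hG.sdist_lineGraph_add_one_of_isEndEdgePair h')
  obtain ⟨x, y, x', y', hx, hy, rfl, hx', hy', rfl⟩ := h
  obtain ⟨u, v, u', v', hu, hv, rfl, -, -, hq⟩ := h'
  change G.dist x y = G.dist u v at hdist
  rcases Sym2.eq_iff.mp hq with ⟨hxu, hyv⟩ | ⟨hxv, hyu⟩
  · have hu : u ∈ s(x, x') := by rw [Subtype.mk.inj hxu]; exact Sym2.mem_mk_left u u'
    have hv : v ∈ s(y, y') := by rw [Subtype.mk.inj hyv]; exact Sym2.mem_mk_left v v'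
    exact (hG.eq_of_mem_of_mem_of_dist_eq hx hy hx' hy' hu hv hdist.symm).symm
  · have hu : u ∈ s(y, y') := by rw [Subtype.mk.inj hyu]; exact Sym2.mem_mk_left u u'
    have hv : v ∈ s(x, x') := by rw [Subtype.mk.inj hxv]; exact Sym2.mem_mk_left v v'
    rw [dist_comm (u := u)] at hdist
    exact (hG.eq_of_mem_of_mem_of_dist_eq hx hy hx' hy' hv hu hdist.symm).symm.trans Sym2.eq_swap

lemma IsTree.isEndEdgePair_of_dist_le (hG : G.IsTree) {x y x' y' : V} (hx : G.Adj x x')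
    (hy : G.Adj y y') (hne : s(x, x') ≠ s(y, y')) (hmin₁ : G.dist x' y' ≤ G.dist x y')
    (hmin₂ : G.dist x' y' ≤ G.dist x' y) :
    G.IsEndEdgePair s(x, y)
      s(⟨s(x, x'), G.mem_edgeSet.mpr hx⟩, ⟨s(y, y'), G.mem_edgeSet.mpr hy⟩) := by
  have hxy' : G.dist x y' = G.dist x' y' + 1 := by
    have := hG.dist_eq_dist_add_one_of_adj y' hx
    rw [dist_comm (u := y') (v := x), dist_comm (u := y') (v := x')] at this
    omega
  have hx'y : G.dist x' y = G.dist x' y' + 1 := by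
    have := hG.dist_eq_dist_add_one_of_adj x' hy
    omega
  have hxy := hG.dist_eq_add_two_of_dist_eq_add_one hx hy hne hxy' hx'y
  exact ⟨x, y, x', y', hx, hy, rfl, by omega, by rw [dist_comm]; omega, rfl⟩

lemma IsTree.isEndEdgePair_rightTotal (hG : G.IsTree) : Relator.RightTotal G.IsEndEdgePair := by
  intro q
  induction q using Sym2.ind with
  | _ e f =>
    obtain ⟨x', hx'e, y', hy'f, hmin⟩ := exists_mem_mem_dist_le (G := G) e f
    obtain ⟨x, hx, rfl⟩ := exists_adj_eq_of_mem_edge e hx'e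
    obtain ⟨y, hy, rfl⟩ := exists_adj_eq_of_mem_edge f hy'f
    by_cases hne : s(x, x') = s(y, y')
    · have hf : (⟨s(y, y'), G.mem_edgeSet.mpr hy⟩ : G.edgeSet) =
          ⟨s(x', x), G.mem_edgeSet.mpr hx.symm⟩ :=
        Subtype.ext (hne.symm.trans Sym2.eq_swap)
      exact ⟨_, hf ▸ isEndEdgePair_of_adj hx⟩
    · exact ⟨_, hG.isEndEdgePair_of_dist_le hx hy hne (hmin _ (by simp) _ (by simp))
        (hmin _ (by simp) _ (by simp))⟩

end SimpleGraph

theorem stmt0_general {V : Type*} (T : SimpleGraph V)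
    (hT : T.IsTree) (k : ℕ) (hk : 1 ≤ k) :
    ∃ F : {p : Sym2 V // sdist T p = k} ≃
          {q : Sym2 T.edgeSet // sdist T.lineGraph q = k - 1},
      ∀ (x y x' y' : V) (hxy : sdist T s(x, y) = k)
        (hx : T.Adj x x') (hx' : T.dist x' y = k - 1)
        (hy : T.Adj y y') (hy' : T.dist y' x = k - 1)
        (hq : sdist T.lineGraph
          s((⟨s(x, x'), T.mem_edgeSet.mpr hx⟩ : T.edgeSet),
            (⟨s(y, y'), T.mem_edgeSet.mpr hy⟩ : T.edgeSet)) = k - 1),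
        F ⟨s(x, y), hxy⟩ =
          ⟨s((⟨s(x, x'), T.mem_edgeSet.mpr hx⟩ : T.edgeSet),
             (⟨s(y, y'), T.mem_edgeSet.mpr hy⟩ : T.edgeSet)), hq⟩ := by
  let R (p : {p : Sym2 V // sdist T p = k})
      (q : {q : Sym2 T.edgeSet // sdist T.lineGraph q = k - 1}) : Prop :=
    T.IsEndEdgePair p q
  have hdist {p q} (h : T.IsEndEdgePair p q) := hT.sdist_lineGraph_add_one_of_isEndEdgePair h
  have hR : Relator.BiTotal R := by
    refine ⟨fun p => ?_, fun q => ?_⟩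
    · obtain ⟨q, hq⟩ := exists_isEndEdgePair (G := T) (p := p) (by rw [p.2]; omega)
      exact ⟨⟨q, by have := hdist hq; have := p.2; omega⟩, hq⟩
    · obtain ⟨p, hp⟩ := hT.isEndEdgePair_rightTotal q
      exact ⟨⟨p, by have := hdist hp; have := q.2; omega⟩, hp⟩
  obtain ⟨F, hF⟩ := hR.exists_equiv_of_biUnique
    ⟨fun _ _ _ h h' => Subtype.ext (hT.isEndEdgePair_leftUnique h h'),
      fun _ _ _ h h' => Subtype.ext (hT.isEndEdgePair_rightUnique h h')⟩
  refine ⟨F, fun x y x' y' hxy hx hx' hy hy' _ => Subtype.ext ?_⟩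
  change T.dist x y = k at hxy
  exact hT.isEndEdgePair_rightUnique (hF _) ⟨x, y, x', y', hx, hy, rfl, by omega, by omega, rfl⟩

/-- For a finite tree `T` and `k ≥ 1`, the map sending an unordered
pair of vertices at distance `k` to the pair of end edges of the unique path
between them is a well-defined bijection onto the unordered pairs of edges at
line-graph distance `k - 1`. -/
theorem stmt0 {V : Type*} [Fintype V] [DecidableEq V] (T : SimpleGraph V)
    [DecidableRel T.Adj] (hT : T.IsTree) (k : ℕ) (hk : 1 ≤ k) :
    ∃ F : {p : Sym2 V // sdist T p = k} ≃
          {q : Sym2 T.edgeSet // sdist T.lineGraph q = k - 1},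
      ∀ (x y x' y' : V) (hxy : sdist T s(x, y) = k)
        (hx : T.Adj x x') (hx' : T.dist x' y = k - 1)
        (hy : T.Adj y y') (hy' : T.dist y' x = k - 1)
        (hq : sdist T.lineGraph
          s((⟨s(x, x'), T.mem_edgeSet.mpr hx⟩ : T.edgeSet),
            (⟨s(y, y'), T.mem_edgeSet.mpr hy⟩ : T.edgeSet)) = k - 1),
        F ⟨s(x, y), hxy⟩ =
          ⟨s((⟨s(x, x'), T.mem_edgeSet.mpr hx⟩ : T.edgeSet),
             (⟨s(y, y'), T.mem_edgeSet.mpr hy⟩ : T.edgeSet)), hq⟩ :=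
  stmt0_general T hT k hk
end

section
/- Let T be a finite tree with n vertices. Then the Hosoya polynomial and the edge-Hosoya polynomial of T satisfy H(T,x) = x·H_e(T,x) + n as polynomials in x. -/
open SimpleGraph Polynomial Finset

/-! In a tree, send an unordered pair `{u, v}` of distinct vertices to the unordered pair formed by
the first and the last edge of the `u`–`v` path. The path is a shortest walk of the line graph
between these two edges, so their line-graph distance is `d(u, v) - 1`; and `u`, `v` are the unique
farthest pair of endpoints of the two edges, so the map is injective. A tree on `n` vertices has
`n - 1` edges, so both sides have `n.choose 2` pairs and the map is a bijection. The `n` diagonal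
pairs contribute the constant term. -/

namespace SimpleGraph

variable {V : Type*} {G : SimpleGraph V}

@[simp]
lemma sdist_mk (u v : V) : sdist G s(u, v) = G.dist u v := rfl

lemma sum_sdist_eq_card_nsmul_add [Fintype V] [DecidableEq V] {M : Type*} [AddCommMonoid M]
    (f : ℕ → M) :
    ∑ p : Sym2 V, f (sdist G p) =
      Fintype.card V • f 0 + ∑ p ∈ univ.filter (fun p : Sym2 V => ¬p.IsDiag),
        f (sdist G p) := by
  rw [← sum_filter_add_sum_filter_not univ Sym2.IsDiag]
  congr 1
  have hdiag : ∀ p ∈ univ.filter Sym2.IsDiag, f (sdist G p) = f 0 := by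
    intro p hp
    induction p using Sym2.ind with
    | _ u v => rw [(Sym2.mk_isDiag_iff.mp (mem_filter.mp hp).2), sdist_mk, dist_self]
  rw [sum_congr rfl hdiag, sum_const, ← Fintype.card_subtype, Sym2.card_subtype_diag]

lemma Reachable.exists_adj_dist_add_one_eq {u v : V} (h : G.Reachable u v) (hne : u ≠ v) :
    ∃ w, G.Adj u w ∧ G.dist w v + 1 = G.dist u v := by
  obtain ⟨p, -, hp⟩ := h.exists_path_of_dist
  cases p with
  | nil => exact absurd rfl hne
  | @cons _ w _ hadj q =>
    refine ⟨w, hadj, le_antisymm ?_ ?_⟩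
    · have := dist_le q
      simp only [Walk.length_cons] at hp
      omega
    · calc G.dist u v ≤ G.dist u w + G.dist w v := hadj.reachable.dist_triangle_left v
        _ = G.dist w v + 1 := by rw [dist_eq_one_iff_adj.mpr hadj, add_comm]

lemma IsAcyclic.eq_of_adj_of_dist_add_one_eq (hG : G.IsAcyclic) {u v w w' : V}
    (hw : G.Adj u w) (hdw : G.dist w v + 1 = G.dist u v)
    (hw' : G.Adj u w') (hdw' : G.dist w' v + 1 = G.dist u v) : w = w' := by
  have huv : G.Reachable u v := Reachable.of_dist_ne_zero (by omega)
  -- prepending the first step to a shortest walk gives a shortest walk, hence a path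
  have shortest_path : ∀ x, G.Adj u x → G.dist x v + 1 = G.dist u v →
      ∃ p : G.Path u v, p.1.snd = x := by
    intro x hx hdx
    obtain ⟨q, hq⟩ := (hx.symm.reachable.trans huv).exists_walk_length_eq_dist
    refine ⟨⟨.cons hx q, (Walk.cons hx q).isPath_of_length_eq_dist ?_⟩, Walk.snd_cons q hx⟩
    rw [Walk.length_cons, hq, hdx]
  obtain ⟨p, rfl⟩ := shortest_path w hw hdw
  obtain ⟨p', rfl⟩ := shortest_path w' hw' hdw'
  rw [(hG.subsingleton_path u v).elim p p']

lemma exists_lineGraph_walk_length_le_one {e f : G.edgeSet} {x : V}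
    (he : x ∈ (e : Sym2 V)) (hf : x ∈ (f : Sym2 V)) :
    ∃ W : G.lineGraph.Walk e f, W.length ≤ 1 := by
  by_cases hef : e = f
  · exact ⟨Walk.nil.copy rfl hef, by simp⟩
  · exact ⟨Walk.cons (lineGraph_adj_iff_exists.mpr ⟨hef, x, he, hf⟩) Walk.nil, by simp⟩

lemma exists_walk_length_le_of_mem_edge {e : Sym2 V} (he : e ∈ G.edgeSet) {u v : V}
    (hu : u ∈ e) (hv : v ∈ e) : ∃ p : G.Walk u v, p.length ≤ 1 := by
  induction e using Sym2.ind with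
  | _ a b =>
    have hab : G.Adj a b := he
    rw [Sym2.mem_iff] at hu hv
    rcases hu with rfl | rfl <;> rcases hv with rfl | rfl
    exacts [⟨.nil, by simp⟩, ⟨hab.toWalk, by simp⟩, ⟨hab.symm.toWalk, by simp⟩,
      ⟨.nil, by simp⟩]

lemma exists_walk_length_le_of_lineGraph_walk {e f : G.edgeSet} (W : G.lineGraph.Walk e f)
    {u v : V} (hu : u ∈ (e : Sym2 V)) (hv : v ∈ (f : Sym2 V)) :
    ∃ p : G.Walk u v, p.length ≤ W.length + 1 := by
  induction W generalizing u with
  | nil => simpa using exists_walk_length_le_of_mem_edge (Subtype.coe_prop _) hu hv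
  | cons hadj W ih =>
    obtain ⟨-, x, hx, hx'⟩ := lineGraph_adj_iff_exists.mp hadj
    obtain ⟨p, hp⟩ := exists_walk_length_le_of_mem_edge (Subtype.coe_prop _) hu hx
    obtain ⟨q, hq⟩ := ih hx' hv
    exact ⟨p.append q, by simp only [Walk.length_append, Walk.length_cons]; omega⟩

lemma dist_le_lineGraph_dist_add_one {e f : G.edgeSet} (h : G.lineGraph.Reachable e f)
    {u v : V} (hu : u ∈ (e : Sym2 V)) (hv : v ∈ (f : Sym2 V)) :
    G.dist u v ≤ G.lineGraph.dist e f + 1 := by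
  obtain ⟨W, hW⟩ := h.exists_walk_length_eq_dist
  obtain ⟨p, hp⟩ := exists_walk_length_le_of_lineGraph_walk W hu hv
  exact (dist_le p).trans (hW ▸ hp)

end SimpleGraph

namespace SimpleGraph.IsTree

variable {V : Type*} {T : SimpleGraph V} (hT : T.IsTree)
include hT

noncomputable def nextVertex {u v : V} (h : u ≠ v) : V :=
  ((hT.connected u v).exists_adj_dist_add_one_eq h).choose

lemma adj_nextVertex {u v : V} (h : u ≠ v) : T.Adj u (hT.nextVertex h) :=
  ((hT.connected u v).exists_adj_dist_add_one_eq h).choose_spec.1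

lemma dist_nextVertex_add_one {u v : V} (h : u ≠ v) :
    T.dist (hT.nextVertex h) v + 1 = T.dist u v :=
  ((hT.connected u v).exists_adj_dist_add_one_eq h).choose_spec.2

lemma eq_nextVertex {u v w : V} (h : u ≠ v) (hw : T.Adj u w)
    (hdw : T.dist w v + 1 = T.dist u v) : w = hT.nextVertex h :=
  hT.isAcyclic.eq_of_adj_of_dist_add_one_eq hw hdw (hT.adj_nextVertex h)
    (hT.dist_nextVertex_add_one h)

lemma nextVertex_of_adj {u v : V} (h : T.Adj u v) : hT.nextVertex h.ne = v :=
  (hT.eq_nextVertex h.ne h (by rw [dist_self, dist_eq_one_iff_adj.mpr h])).symm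

lemma nextVertex_symm_eq_nextVertex_nextVertex {u v : V} (h : u ≠ v)
    (hw : hT.nextVertex h ≠ v) :
    hT.nextVertex h.symm = hT.nextVertex hw.symm := by
  have huw := hT.adj_nextVertex h
  have hdw := hT.dist_nextVertex_add_one h
  have hvz := hT.adj_nextVertex hw.symm
  have hdz := hT.dist_nextVertex_add_one hw.symm
  set w := hT.nextVertex h
  set z := hT.nextVertex hw.symm
  refine (hT.eq_nextVertex h.symm hvz (le_antisymm ?_ ?_)).symm
  · calc T.dist z u + 1 ≤ T.dist z w + T.dist w u + 1 :=
          Nat.add_le_add_right ((hT.connected z w).dist_triangle_left u) 1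
      _ = T.dist v u := by
          rw [dist_comm (u := w), dist_eq_one_iff_adj.mpr huw, dist_comm (u := v) (v := u),
            ← hdw, dist_comm (u := w), ← hdz]
  · calc T.dist v u ≤ T.dist v z + T.dist z u := (hT.connected v z).dist_triangle_left u
      _ = T.dist z u + 1 := by rw [dist_eq_one_iff_adj.mpr hvz, add_comm]

noncomputable def firstEdge {u v : V} (h : u ≠ v) : T.edgeSet :=
  ⟨s(u, hT.nextVertex h), hT.adj_nextVertex h⟩

@[simp]
lemma self_mem_firstEdge {u v : V} (h : u ≠ v) : u ∈ (hT.firstEdge h : Sym2 V) :=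
  Sym2.mem_mk_left _ _

lemma firstEdge_symm_of_adj {u v : V} (h : T.Adj u v) :
    hT.firstEdge h.ne.symm = hT.firstEdge h.ne := by
  simp only [firstEdge, hT.nextVertex_of_adj h, hT.nextVertex_of_adj h.symm, Sym2.eq_swap]

lemma exists_lineGraph_walk_firstEdge {u v : V} (h : u ≠ v) :
    ∃ W : T.lineGraph.Walk (hT.firstEdge h) (hT.firstEdge h.symm),
      W.length + 1 ≤ T.dist u v := by
  induction hd : T.dist u v using Nat.strong_induction_on generalizing u v with
  | _ d ih =>
  by_cases hadj : T.Adj u v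
  · refine ⟨Walk.nil.copy rfl (hT.firstEdge_symm_of_adj hadj).symm, ?_⟩
    rw [← hd, dist_eq_one_iff_adj.mpr hadj, Walk.length_copy, Walk.length_nil]
  have hdw := hT.dist_nextVertex_add_one h
  set w := hT.nextVertex h
  have hwv : w ≠ v := fun hwv => hadj (hwv ▸ hT.adj_nextVertex h)
  obtain ⟨W, hW⟩ := ih _ (by omega) hwv rfl
  obtain ⟨W₀, hW₀⟩ := exists_lineGraph_walk_length_le_one (e := hT.firstEdge h)
    (f := hT.firstEdge hwv) (x := w) (by simp [firstEdge, w]) (by simp [firstEdge])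
  have hend : hT.firstEdge hwv.symm = hT.firstEdge h.symm := by
    simp only [firstEdge, hT.nextVertex_symm_eq_nextVertex_nextVertex h hwv]
  refine ⟨(W₀.append W).copy rfl hend, ?_⟩
  rw [Walk.length_copy, Walk.length_append]
  omega

lemma lineGraph_dist_firstEdge_add_one {u v : V} (h : u ≠ v) :
    T.lineGraph.dist (hT.firstEdge h) (hT.firstEdge h.symm) + 1 = T.dist u v := by
  obtain ⟨W, hW⟩ := hT.exists_lineGraph_walk_firstEdge h
  have hle := dist_le_lineGraph_dist_add_one ⟨W⟩ (hT.self_mem_firstEdge h)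
    (hT.self_mem_firstEdge h.symm)
  have := dist_le W
  omega

lemma dist_lt_of_mem_firstEdge {u v x y : V} (h : u ≠ v) (hx : x ∈ (hT.firstEdge h : Sym2 V))
    (hy : y ∈ (hT.firstEdge h.symm : Sym2 V)) (hxy : s(x, y) ≠ s(u, v)) :
    T.dist x y < T.dist u v := by
  simp only [firstEdge, Sym2.mem_iff] at hx hy
  by_cases hadj : T.Adj u v
  · rw [hT.nextVertex_of_adj hadj] at hx
    rw [hT.nextVertex_of_adj hadj.symm] at hy
    have hxy' : x = y := by
      rcases hx with rfl | rfl <;> rcases hy with rfl | rfl <;> simp_all [Sym2.eq_swap]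
    rw [hxy', dist_self, dist_eq_one_iff_adj.mpr hadj]
    exact one_pos
  · have hwv : hT.nextVertex h ≠ v := fun hwv => hadj (hwv ▸ hT.adj_nextVertex h)
    have hdw := hT.dist_nextVertex_add_one h
    have hdz := hT.dist_nextVertex_add_one h.symm
    have hdzw := hT.dist_nextVertex_add_one hwv.symm
    rw [← hT.nextVertex_symm_eq_nextVertex_nextVertex h hwv] at hdzw
    have hvu : T.dist v u = T.dist u v := dist_comm
    -- the four endpoint pairs are at distances `d`, `d - 1`, `d - 1` and `d - 2`
    rcases hx with rfl | rfl <;> rcases hy with rfl | rfl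
    · exact absurd rfl hxy
    · rw [dist_comm]; omega
    · omega
    · have h₁ : T.dist (hT.nextVertex h) (hT.nextVertex h.symm) =
          T.dist (hT.nextVertex h.symm) (hT.nextVertex h) := dist_comm
      have h₂ : T.dist v (hT.nextVertex h) = T.dist (hT.nextVertex h) v := dist_comm
      omega

-- `e₀` is a junk value on the diagonal, where there is no first edge.
open scoped Classical in
noncomputable def firstEdgePair (e₀ : T.edgeSet) : Sym2 V → Sym2 T.edgeSet :=
  Sym2.lift ⟨fun u v =>
      if h : u = v then s(e₀, e₀) else s(hT.firstEdge h, hT.firstEdge (Ne.symm h)),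
    fun u v => by
      by_cases h : u = v
      · subst h; rfl
      · simp only [dif_neg h, dif_neg (Ne.symm h), Sym2.eq_swap]⟩

lemma firstEdgePair_mk (e₀ : T.edgeSet) {u v : V} (h : u ≠ v) :
    hT.firstEdgePair e₀ s(u, v) = s(hT.firstEdge h, hT.firstEdge h.symm) := by
  simp [firstEdgePair, h]

lemma sdist_firstEdgePair_add_one (e₀ : T.edgeSet) {p : Sym2 V} (hp : ¬p.IsDiag) :
    sdist T.lineGraph (hT.firstEdgePair e₀ p) + 1 = sdist T p := by
  induction p using Sym2.ind with
  | _ u v =>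
    rw [Sym2.mk_isDiag_iff] at hp
    rw [hT.firstEdgePair_mk e₀ hp, sdist_mk, sdist_mk, hT.lineGraph_dist_firstEdge_add_one]

lemma injOn_firstEdgePair (e₀ : T.edgeSet) :
    Set.InjOn (hT.firstEdgePair e₀) {p | ¬p.IsDiag} := by
  intro p hp q hq hpq
  induction p using Sym2.ind with
  | _ u v =>
  induction q using Sym2.ind with
  | _ u' v' =>
  rw [Set.mem_ofPred_eq, Sym2.mk_isDiag_iff] at hp hq
  rw [hT.firstEdgePair_mk e₀ hp, hT.firstEdgePair_mk e₀ hq, Sym2.eq_iff] at hpq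
  by_contra hne
  -- both pairs would be the farthest pair of endpoints of the same two edges
  rcases hpq with ⟨he, hf⟩ | ⟨he, hf⟩
  · have h₁ := hT.dist_lt_of_mem_firstEdge hp (he ▸ hT.self_mem_firstEdge hq)
      (hf ▸ hT.self_mem_firstEdge (Ne.symm hq)) (Ne.symm hne)
    have h₂ := hT.dist_lt_of_mem_firstEdge hq (he ▸ hT.self_mem_firstEdge hp)
      (hf ▸ hT.self_mem_firstEdge (Ne.symm hp)) hne
    omega
  · have h₁ := hT.dist_lt_of_mem_firstEdge hp (he ▸ hT.self_mem_firstEdge (Ne.symm hq))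
      (hf ▸ hT.self_mem_firstEdge hq) (by rwa [Sym2.eq_swap, ne_comm])
    have h₂ := hT.dist_lt_of_mem_firstEdge (Ne.symm hq) (he ▸ hT.self_mem_firstEdge hp)
      (hf ▸ hT.self_mem_firstEdge (Ne.symm hp)) (by rwa [Sym2.eq_swap (a := v')])
    omega

lemma sum_sdist_not_isDiag [Fintype V] [DecidableEq V] [DecidableRel T.Adj] {M : Type*}
    [AddCommMonoid M] (f : ℕ → M) :
    ∑ p ∈ univ.filter (fun p : Sym2 V => ¬p.IsDiag), f (sdist T p) =
      ∑ q : Sym2 T.edgeSet, f (sdist T.lineGraph q + 1) := by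
  rcases isEmpty_or_nonempty T.edgeSet with hE | ⟨⟨e₀⟩⟩
  · rw [univ_eq_empty (α := Sym2 T.edgeSet), sum_empty]
    refine sum_eq_zero fun p hp => ?_
    induction p using Sym2.ind with
    | _ u v => exact (hE.false (hT.firstEdge (by simpa using hp))).elim
  set s := univ.filter (fun p : Sym2 V => ¬p.IsDiag)
  have hinj : Set.InjOn (hT.firstEdgePair e₀) s :=
    (hT.injOn_firstEdgePair e₀).mono fun p hp => (mem_filter.mp hp).2
  have himg : s.image (hT.firstEdgePair e₀) = univ := by
    refine eq_univ_of_card _ ?_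
    rw [card_image_of_injOn hinj, ← Fintype.card_subtype, Sym2.card_subtype_not_diag, Sym2.card,
      ← edgeFinset_card, hT.card_edgeFinset]
  calc ∑ p ∈ s, f (sdist T p)
      = ∑ p ∈ s, f (sdist T.lineGraph (hT.firstEdgePair e₀ p) + 1) :=
        sum_congr rfl fun p hp => by rw [hT.sdist_firstEdgePair_add_one e₀ (mem_filter.mp hp).2]
    _ = ∑ q ∈ s.image (hT.firstEdgePair e₀), f (sdist T.lineGraph q + 1) :=
        (sum_image (f := fun q => f (sdist T.lineGraph q + 1)) hinj).symm
    _ = _ := by rw [himg]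

end SimpleGraph.IsTree

/-- For a finite tree `T` on `n` vertices,
`H(T,x) = x · H_e(T,x) + n` as polynomials. -/
theorem stmt2 {V : Type*} [Fintype V] [DecidableEq V] (T : SimpleGraph V)
    [DecidableRel T.Adj] (hT : T.IsTree) :
    hosoyaPoly T = X * edgeHosoyaPoly T + C (Fintype.card V : ℝ) := by
  rw [hosoyaPoly, sum_sdist_eq_card_nsmul_add (X ^ ·), hT.sum_sdist_not_isDiag (X ^ ·),
    edgeHosoyaPoly, mul_sum, add_comm]
  simp only [pow_zero, nsmul_one, pow_succ', map_natCast]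
end

section
/- Let T be a finite tree. Then the edge-hyper-Wiener index of T equals the hyper-Wiener index minus the Wiener index: WW_e(T) = WW(T) − W(T). -/
open SimpleGraph Polynomial Finset

/-!
In a tree, send an ordered pair `(u, v)` of vertices at distance `d ≥ 2` to the first and the last
edge of the `u`–`v` path. These two edges are at distance `d - 1` in the line graph, and `(u, v)` is
recovered from them as the unique pair of their endpoints at maximal distance; conversely, for
two distinct edges that pair of endpoints is at distance at least `2` and its path starts and ends
with the given edges. So `∑ h (d(u, v)) = ∑ h (d_L(e, f) + 1)` for every `h` vanishing at `0`
and `1`, and `h n = n² - n` turns this into `2 (WW - W) = 2 WW_e`.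
-/

lemma Sym2.exists_mem_forall_le₂ {α β : Type*} [LinearOrder β] (f : α → α → β) (z w : Sym2 α) :
    ∃ u ∈ z, ∃ v ∈ w, ∀ x ∈ z, ∀ y ∈ w, f x y ≤ f u v := by
  classical
  induction z using Sym2.ind with | _ a b => ?_
  induction w using Sym2.ind with | _ c d => ?_
  obtain ⟨⟨u, v⟩, huv, hmax⟩ := exists_max_image (({a, b} : Finset α) ×ˢ {c, d})
    (fun x => f x.1 x.2) ⟨(a, c), by simp⟩
  simp only [mem_product, mem_insert, mem_singleton] at huv hmax
  exact ⟨u, Sym2.mem_iff.mpr huv.1, v, Sym2.mem_iff.mpr huv.2,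
    fun x hx y hy => hmax (x, y) ⟨Sym2.mem_iff.mp hx, Sym2.mem_iff.mp hy⟩⟩

theorem Fintype.sum_sym2_mk_eq_two_nsmul {α M : Type*} [Fintype α] [DecidableEq α]
    [AddCommMonoid M] (f : Sym2 α → M) (hf : ∀ a, f s(a, a) = 0) :
    ∑ x : α × α, f s(x.1, x.2) = 2 • ∑ z : Sym2 α, f z := by
  rw [← Finset.sum_fiberwise univ (fun x : α × α => s(x.1, x.2)), smul_sum]
  refine Finset.sum_congr rfl fun z _ => ?_
  rw [Finset.sum_congr rfl fun x hx => congrArg f (mem_filter.mp hx).2, sum_const]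
  induction z using Sym2.ind with | _ a b => ?_
  by_cases hab : a = b
  · simp [hab, hf]
  · congr 1
    rw [Finset.card_eq_two]
    refine ⟨(a, b), (b, a), by simp [hab], ?_⟩
    ext ⟨x, y⟩
    simp

namespace SimpleGraph

variable {V : Type*} {G : SimpleGraph V}

lemma adj_or_eq_of_mem_of_mem_edgeSet {e : Sym2 V} (he : e ∈ G.edgeSet) {x y : V}
    (hx : x ∈ e) (hy : y ∈ e) : x = y ∨ G.Adj x y := by
  by_cases hxy : x = y
  · exact .inl hxy
  · rw [(Sym2.mem_and_mem_iff hxy).mp ⟨hx, hy⟩] at he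
    exact .inr he

lemma dist_le_one_of_mem_of_mem_edgeSet {e : Sym2 V} (he : e ∈ G.edgeSet) {x y : V}
    (hx : x ∈ e) (hy : y ∈ e) : G.dist x y ≤ 1 := by
  rcases adj_or_eq_of_mem_of_mem_edgeSet he hx hy with rfl | hadj
  · simp
  · exact (dist_eq_one_iff_adj.mpr hadj).le

lemma reachable_of_mem_of_mem_edgeSet {e : Sym2 V} (he : e ∈ G.edgeSet) {x y : V}
    (hx : x ∈ e) (hy : y ∈ e) : G.Reachable x y := by
  rcases adj_or_eq_of_mem_of_mem_edgeSet he hx hy with rfl | hadj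
  · rfl
  · exact hadj.reachable

lemma dist_le_length_add_one_of_lineGraph_walk_s8 {e f : G.edgeSet} (W : G.lineGraph.Walk e f)
    {x y : V} (hx : x ∈ (e : Sym2 V)) (hy : y ∈ (f : Sym2 V)) :
    G.dist x y ≤ W.length + 1 := by
  induction W generalizing x with
  | nil => exact dist_le_one_of_mem_of_mem_edgeSet (Subtype.prop _) hx hy
  | @cons e e' f h W ih =>
    obtain ⟨-, w, hwe, hwe'⟩ := lineGraph_adj_iff_exists.mp h
    have hxw := dist_le_one_of_mem_of_mem_edgeSet e.2 hx hwe
    have hwy := ih hwe' hy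
    have := (reachable_of_mem_of_mem_edgeSet e.2 hx hwe).dist_triangle_left y
    rw [Walk.length_cons]
    omega

namespace Walk

variable {u v : V}

lemma dist_snd_add_one_le (p : G.Walk u v) (hp : ¬p.Nil) : G.dist p.snd v + 1 ≤ p.length :=
  p.length_tail_add_one hp ▸ Nat.add_le_add_right (dist_le p.tail) 1

lemma dist_penultimate_add_one_le (p : G.Walk u v) (hp : ¬p.Nil) :
    G.dist u p.penultimate + 1 ≤ p.length :=
  p.length_dropLast_add_one hp ▸ Nat.add_le_add_right (dist_le p.dropLast) 1

lemma dist_snd_penultimate_add_two_le (p : G.Walk u v) (hp : 2 ≤ p.length) :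
    G.dist p.snd p.penultimate + 2 ≤ p.length := by
  have hnil : ¬p.Nil := by rw [not_nil_iff_lt_length]; omega
  have htail : p.tail.length + 1 = p.length := p.length_tail_add_one hnil
  have hpen : p.tail.penultimate = p.penultimate := by
    simp only [penultimate, getVert_tail]
    congr 1
    omega
  have := dist_le p.tail.dropLast
  rw [length_dropLast, hpen] at this
  omega

lemma dist_lt_length_of_mem_of_mem (p : G.Walk u v) (hp : 2 ≤ p.length) {x y : V}
    (hx : x ∈ s(u, p.snd)) (hy : y ∈ s(p.penultimate, v)) (hxy : (x, y) ≠ (u, v)) :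
    G.dist x y < p.length := by
  have hnil : ¬p.Nil := by rw [not_nil_iff_lt_length]; omega
  have h₁ := p.dist_snd_add_one_le hnil
  have h₂ := p.dist_penultimate_add_one_le hnil
  have h₃ := p.dist_snd_penultimate_add_two_le hp
  rcases Sym2.mem_iff.mp hx with rfl | rfl <;> rcases Sym2.mem_iff.mp hy with rfl | rfl
  all_goals first | exact absurd rfl hxy | omega

def firstEdge (p : G.Walk u v) (hp : ¬p.Nil) : G.edgeSet := ⟨s(u, p.snd), p.adj_snd hp⟩

def lastEdge (p : G.Walk u v) (hp : ¬p.Nil) : G.edgeSet :=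
  ⟨s(p.penultimate, v), p.adj_penultimate hp⟩

lemma exists_lineGraph_walk_firstEdge_lastEdge (p : G.Walk u v) (hp : ¬p.Nil) :
    ∃ W : G.lineGraph.Walk (p.firstEdge hp) (p.lastEdge hp), W.length + 1 ≤ p.length := by
  induction p with
  | nil => exact absurd .nil hp
  | @cons u w v h q ih =>
    cases q with
    | nil => exact ⟨Walk.nil.copy rfl (Subtype.ext (by simp [firstEdge, lastEdge])), by simp⟩
    | cons h' q' =>
      obtain ⟨W, hW⟩ := ih not_nil_cons
      have hlast : (cons h (cons h' q')).lastEdge hp = (cons h' q').lastEdge not_nil_cons :=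
        Subtype.ext (by simp [lastEdge, penultimate_cons_of_not_nil _ _ not_nil_cons])
      by_cases hfirst : (cons h (cons h' q')).firstEdge hp = (cons h' q').firstEdge not_nil_cons
      · exact ⟨W.copy hfirst.symm hlast.symm, by simp at hW ⊢; omega⟩
      · have hadj : G.lineGraph.Adj ((cons h (cons h' q')).firstEdge hp)
            ((cons h' q').firstEdge not_nil_cons) :=
          lineGraph_adj_iff_exists.mpr ⟨hfirst, w, by simp [firstEdge], by simp [firstEdge]⟩
        exact ⟨(W.copy rfl hlast.symm).cons hadj, by simp at hW ⊢; omega⟩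

lemma lineGraph_dist_firstEdge_lastEdge_add_one (p : G.Walk u v) (hp : ¬p.Nil)
    (hlen : p.length = G.dist u v) :
    G.lineGraph.dist (p.firstEdge hp) (p.lastEdge hp) + 1 = G.dist u v := by
  obtain ⟨W, hW⟩ := p.exists_lineGraph_walk_firstEdge_lastEdge hp
  obtain ⟨W₀, hW₀⟩ := W.reachable.exists_walk_length_eq_dist
  have hupper := dist_le W
  have hlower := dist_le_length_add_one_of_lineGraph_walk_s8 W₀ (x := u) (y := v)
    (Sym2.mem_mk_left _ _) (Sym2.mem_mk_right _ _)
  omega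

lemma firstEdge_ne_lastEdge (p : G.Walk u v) (hp : ¬p.Nil) (hlen : p.length = G.dist u v)
    (h2 : 2 ≤ p.length) : p.firstEdge hp ≠ p.lastEdge hp := fun heq => by
  have hd := p.lineGraph_dist_firstEdge_lastEdge_add_one hp hlen
  rw [heq, dist_self] at hd
  omega

lemma eq_of_firstEdge_eq_of_lastEdge_eq {u' v' : V} {p : G.Walk u v} {p' : G.Walk u' v'}
    (hlen : p.length = G.dist u v) (hlen' : p'.length = G.dist u' v')
    (h2 : 2 ≤ p.length) (h2' : 2 ≤ p'.length) (hnil : ¬p.Nil) (hnil' : ¬p'.Nil)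
    (hfirst : p.firstEdge hnil = p'.firstEdge hnil') (hlast : p.lastEdge hnil = p'.lastEdge hnil') :
    u = u' ∧ v = v' := by
  have hfirst : s(u, p.snd) = s(u', p'.snd) := congrArg Subtype.val hfirst
  have hlast : s(p.penultimate, v) = s(p'.penultimate, v') := congrArg Subtype.val hlast
  by_contra hne
  have h₁ := p.dist_lt_length_of_mem_of_mem h2 (x := u') (y := v')
    (hfirst ▸ Sym2.mem_mk_left _ _) (hlast ▸ Sym2.mem_mk_right _ _)
    (fun h => hne ⟨(Prod.ext_iff.mp h).1.symm, (Prod.ext_iff.mp h).2.symm⟩)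
  have h₂ := p'.dist_lt_length_of_mem_of_mem h2' (x := u) (y := v)
    (hfirst ▸ Sym2.mem_mk_left _ _) (hlast ▸ Sym2.mem_mk_right _ _)
    (fun h => hne (Prod.ext_iff.mp h))
  omega

end Walk

lemma IsAcyclic.snd_eq_of_adj_of_dist_lt (hG : G.IsAcyclic) {u v w : V} {p : G.Walk u v}
    (hp : p.IsPath) (hadj : G.Adj u w) (hlt : G.dist w v < G.dist u v) : p.snd = w := by
  classical
  obtain ⟨q, hq, hqlen⟩ := (hadj.symm.reachable.trans p.reachable).exists_path_of_dist
  have hu : u ∉ q.support := fun hu => by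
    have := dist_le (q.dropUntil u hu)
    have := q.length_dropUntil_le_length hu
    omega
  have hw : w ∈ p.reverse.support := hG.mem_support_of_ne_mem_support_of_adj_of_isPath
    hp.reverse hq.reverse hadj (by simpa using hu)
  exact (hG.eq_snd_of_adj_start hp hadj (by simpa using hw)).symm

lemma IsAcyclic.penultimate_eq_of_adj_of_dist_lt (hG : G.IsAcyclic) {u v w : V}
    {p : G.Walk u v} (hp : p.IsPath) (hadj : G.Adj v w) (hlt : G.dist u w < G.dist u v) :
    p.penultimate = w := by
  rw [← Walk.snd_reverse]
  exact hG.snd_eq_of_adj_of_dist_lt hp.reverse hadj (by rwa [dist_comm, dist_comm (u := v)])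

lemma IsAcyclic.mk_snd_eq_of_forall_dist_le (hG : G.IsAcyclic) {e : Sym2 V} (he : e ∈ G.edgeSet)
    {u v : V} (hu : u ∈ e) {p : G.Walk u v} (hp : p.IsPath)
    (hmax : ∀ x ∈ e, G.dist x v ≤ G.dist u v) : s(u, p.snd) = e := by
  obtain ⟨w, rfl⟩ := Sym2.mem_iff_exists.mp hu
  have hadj : G.Adj u w := he
  have hne := hG.dist_ne_of_adj hadj p.reachable.symm
  have hle := hmax w (Sym2.mem_mk_right _ _)
  rw [dist_comm, dist_comm (u := v)] at hne
  rw [hG.snd_eq_of_adj_of_dist_lt hp hadj (by omega)]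

lemma IsAcyclic.mk_penultimate_eq_of_forall_dist_le (hG : G.IsAcyclic) {f : Sym2 V}
    (hf : f ∈ G.edgeSet) {u v : V} (hv : v ∈ f) {p : G.Walk u v} (hp : p.IsPath)
    (hmax : ∀ y ∈ f, G.dist u y ≤ G.dist u v) : s(p.penultimate, v) = f := by
  obtain ⟨z, rfl⟩ := Sym2.mem_iff_exists.mp hv
  have hadj : G.Adj v z := hf
  have hne := hG.dist_ne_of_adj hadj p.reachable
  have hle := hmax z (Sym2.mem_mk_right _ _)
  rw [hG.penultimate_eq_of_adj_of_dist_lt hp hadj (by omega), Sym2.eq_swap]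

lemma IsTree.eq_of_forall_dist_le_one (hG : G.IsTree) {e f : Sym2 V} (he : e ∈ G.edgeSet)
    (hf : f ∈ G.edgeSet) (h : ∀ x ∈ e, ∀ y ∈ f, G.dist x y ≤ 1) : e = f := by
  induction e using Sym2.ind with | _ a b => ?_
  induction f using Sym2.ind with | _ c d => ?_
  have hmem : ∀ x ∈ s(a, b), x ∈ s(c, d) := fun x hx => by
    have hc := h x hx c (Sym2.mem_mk_left _ _)
    have hd := h x hx d (Sym2.mem_mk_right _ _)
    have hne := hG.dist_ne_of_adj x (show G.Adj c d from hf)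
    rcases (by omega : G.dist x c = 0 ∨ G.dist x d = 0) with h0 | h0
    · exact hG.connected.dist_eq_zero_iff.mp h0 ▸ Sym2.mem_mk_left _ _
    · exact hG.connected.dist_eq_zero_iff.mp h0 ▸ Sym2.mem_mk_right _ _
  exact ((Sym2.mem_and_mem_iff (G.ne_of_adj he)).mp
    ⟨hmem a (Sym2.mem_mk_left _ _), hmem b (Sym2.mem_mk_right _ _)⟩).symm

lemma IsTree.exists_mk_snd_eq_and_mk_penultimate_eq (hG : G.IsTree) {e f : Sym2 V}
    (he : e ∈ G.edgeSet) (hf : f ∈ G.edgeSet) (hef : e ≠ f) :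
    ∃ u v, 2 ≤ G.dist u v ∧
      ∀ p : G.Walk u v, p.IsPath → s(u, p.snd) = e ∧ s(p.penultimate, v) = f := by
  obtain ⟨u, hu, v, hv, hmax⟩ := Sym2.exists_mem_forall_le₂ G.dist e f
  refine ⟨u, v, ?_, fun p hp => ⟨?_, ?_⟩⟩
  · by_contra! hlt
    exact hef (hG.eq_of_forall_dist_le_one he hf fun x hx y hy => by
      have := hmax x hx y hy
      omega)
  · exact hG.isAcyclic.mk_snd_eq_of_forall_dist_le he hu hp fun x hx => hmax x hx v hv
  · exact hG.isAcyclic.mk_penultimate_eq_of_forall_dist_le hf hv hp fun y hy => hmax u hu y hy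

noncomputable def Connected.geodesic (hG : G.Connected) (u v : V) : G.Walk u v :=
  (hG.exists_walk_length_eq_dist u v).choose

lemma Connected.length_geodesic (hG : G.Connected) (u v : V) :
    (hG.geodesic u v).length = G.dist u v :=
  (hG.exists_walk_length_eq_dist u v).choose_spec

theorem IsTree.sum_dist_eq_sum_lineGraph_dist_add_one [Fintype V] [DecidableEq V]
    [DecidableRel G.Adj] (hG : G.IsTree) {M : Type*} [AddCommMonoid M] (h : ℕ → M)
    (h₀ : h 0 = 0) (h₁ : h 1 = 0) :
    ∑ x : V × V, h (G.dist x.1 x.2) =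
      ∑ y : G.edgeSet × G.edgeSet, h (G.lineGraph.dist y.1 y.2 + 1) := by
  set P := hG.connected.geodesic
  have hP : ∀ u v, (P u v).length = G.dist u v := hG.connected.length_geodesic
  have hlen : ∀ x ∈ ({x | 2 ≤ G.dist x.1 x.2} : Finset (V × V)), 2 ≤ (P x.1 x.2).length :=
    fun x hx => (hP _ _).symm ▸ (mem_filter.mp hx).2
  have hnil : ∀ x ∈ ({x | 2 ≤ G.dist x.1 x.2} : Finset (V × V)), ¬(P x.1 x.2).Nil :=
    fun x hx => Walk.not_nil_iff_lt_length.mpr (by have := hlen x hx; omega)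
  rw [← sum_filter_of_ne (p := fun x : V × V => 2 ≤ G.dist x.1 x.2) fun x _ hx => by
      by_contra! hlt
      interval_cases G.dist x.1 x.2 <;> simp_all,
    ← sum_filter_of_ne (p := fun y : G.edgeSet × G.edgeSet => y.1 ≠ y.2) fun y _ hy heq => by
      simp [heq, h₁] at hy]
  refine sum_bij
    (fun x hx => ((P x.1 x.2).firstEdge (hnil x hx), (P x.1 x.2).lastEdge (hnil x hx)))
    (fun x hx => ?_) (fun x hx x' hx' heq => ?_) (fun y hy => ?_) (fun x hx => ?_)
  · simpa using (P x.1 x.2).firstEdge_ne_lastEdge (hnil x hx) (hP _ _) (hlen x hx)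
  · obtain ⟨hu, hv⟩ := Walk.eq_of_firstEdge_eq_of_lastEdge_eq (hP _ _) (hP _ _) (hlen x hx)
      (hlen x' hx') (hnil x hx) (hnil x' hx') (Prod.ext_iff.mp heq).1 (Prod.ext_iff.mp heq).2
    exact Prod.ext hu hv
  · obtain ⟨u, v, h2, hends⟩ := hG.exists_mk_snd_eq_and_mk_penultimate_eq y.1.2 y.2.2
      (Subtype.coe_injective.ne (mem_filter.mp hy).2)
    obtain ⟨hfirst, hlast⟩ := hends (P u v) ((P u v).isPath_of_length_eq_dist (hP u v))
    exact ⟨(u, v), by simpa using h2, Prod.ext (Subtype.ext hfirst) (Subtype.ext hlast)⟩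
  · rw [(P x.1 x.2).lineGraph_dist_firstEdge_lastEdge_add_one (hnil x hx) (hP _ _)]

theorem IsTree.sum_sdist_eq_sum_sdist_lineGraph_add_one [Fintype V] [DecidableEq V]
    [DecidableRel G.Adj] (hG : G.IsTree) {M : Type*} [AddCommMonoid M] [IsAddTorsionFree M]
    (h : ℕ → M) (h₀ : h 0 = 0) (h₁ : h 1 = 0) :
    ∑ p : Sym2 V, h (sdist G p) = ∑ q : Sym2 G.edgeSet, h (sdist G.lineGraph q + 1) := by
  apply (nsmul_right_inj two_ne_zero).mp
  rw [← Fintype.sum_sym2_mk_eq_two_nsmul _ fun _ => by simp [sdist, h₀],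
    ← Fintype.sum_sym2_mk_eq_two_nsmul _ fun _ => by simp [sdist, h₁]]
  exact hG.sum_dist_eq_sum_lineGraph_dist_add_one h h₀ h₁

end SimpleGraph

/-- For a finite tree `T`, `WW_e(T) = WW(T) - W(T)`. -/
theorem stmt8 {V : Type*} [Fintype V] [DecidableEq V] (T : SimpleGraph V)
    [DecidableRel T.Adj] (hT : T.IsTree) :
    edgeHyperWiener T = hyperWiener T - (wienerIndex T : ℝ) := by
  have key := hT.sum_sdist_eq_sum_sdist_lineGraph_add_one (fun n : ℕ => (n : ℝ) ^ 2 - n)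
    (by simp) (by simp)
  have hshift : ∀ n : ℕ, ((n + 1 : ℕ) : ℝ) ^ 2 - ((n + 1 : ℕ) : ℝ) = n + (n : ℝ) ^ 2 :=
    fun n => by push_cast; ring
  simp only [hshift, sum_add_distrib, sum_sub_distrib] at key
  rw [edgeHyperWiener, hyperWiener, wienerIndex, Nat.cast_sum]
  linarith
end

section
/- Let T be a finite tree. For the map F from vertex pairs at distance k (k≥1) to edge pairs at distance k−1 defined by F({x,y}) = {e_x, e_y} (the first edges of the x–y path at each end), F is injective: if F({x,y}) = F({a,b}) then {x,y} = {a,b}. -/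
open SimpleGraph Polynomial Finset

/-!
In a tree, the neighbour `x'` of `x` with `d(x', y) = k - 1` and the neighbour `y'` of `y` with
`d(x, y') = k - 1` both lie on the `x`–`y` path, so `d(x', y') < k` unless `k = 1`, where
`{x', y'} = {y, x}`. Hence, of the ways of matching `{x, x'}, {y, y'}` with `{a, a'}, {b, b'}`,
only the one sending `x, y` to `a, b` (in some order) is consistent with `d(a, b) = k` and
`d(a', b) = d(b', a) = k - 1`.
-/

namespace SimpleGraph

variable {V : Type*} {G : SimpleGraph V}

lemma Walk.dist_le_length_of_mem_support [DecidableEq V] {u v w : V} (p : G.Walk u v)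
    (hw : w ∈ p.support) : G.dist u w ≤ p.length :=
  (G.dist_le _).trans (p.length_takeUntil_le_length hw)

lemma Walk.dist_le_length_of_mem_support' [DecidableEq V] {u v w : V} (p : G.Walk u v)
    (hw : w ∈ p.support) : G.dist w v ≤ p.length :=
  (G.dist_le _).trans (p.length_dropUntil_le_length hw)

/-- In a forest `x'` and `y'` both lie on the unique `x`–`y` path. -/
theorem IsAcyclic.dist_lt_or_swap_of_adj (hG : G.IsAcyclic) {x x' y y' : V}
    (hx : G.Adj x x') (hy : G.Adj y y')
    (hx' : G.dist x' y < G.dist x y) (hy' : G.dist x y' < G.dist x y) :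
    G.dist x' y' < G.dist x y ∨ x' = y ∧ y' = x := by
  classical
  have hxy : G.Reachable x y := Reachable.of_dist_ne_zero (by omega)
  obtain ⟨Q, hQ, hQlen⟩ := (hx.symm.reachable.trans hxy).exists_path_of_dist
  obtain ⟨R, hR, hRlen⟩ := (hxy.trans hy.reachable).exists_path_of_dist
  have hxQ : x ∉ Q.support := fun h => by
    have := Q.dist_le_length_of_mem_support' h
    omega
  have hyR : y ∉ R.support := fun h => by
    have := R.dist_le_length_of_mem_support h
    omega
  have hy'P : y' ∈ (Walk.cons hx Q).support :=
    hG.mem_support_of_ne_mem_support_of_adj_of_isPath (hQ.cons hxQ) hR hy hyR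
  rw [Walk.support_cons, List.mem_cons] at hy'P
  rcases hy'P with rfl | hy'Q
  · rw [dist_eq_one_iff_adj.mpr hy.symm, Nat.lt_one_iff,
      (hx.symm.reachable.trans hxy).dist_eq_zero_iff] at hx'
    exact Or.inr ⟨hx', rfl⟩
  · have := Q.dist_le_length_of_mem_support hy'Q
    exact Or.inl (by omega)

theorem IsAcyclic.eq_of_end_edges_eq (hG : G.IsAcyclic) {x x' y y' a a' b b' : V}
    (hx : G.Adj x x') (hy : G.Adj y y')
    (hx' : G.dist x' y < G.dist x y) (hy' : G.dist x y' < G.dist x y)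
    (ha' : G.dist a' b < G.dist a b) (hab : G.dist a b = G.dist x y)
    (hxa : s(x, x') = s(a, a')) (hyb : s(y, y') = s(b, b')) :
    s(x, y) = s(a, b) := by
  rcases Sym2.eq_iff.mp hxa with ⟨rfl, rfl⟩ | ⟨rfl, rfl⟩ <;>
    rcases Sym2.eq_iff.mp hyb with ⟨rfl, rfl⟩ | ⟨rfl, rfl⟩
  · rfl
  · omega
  · omega
  · rcases hG.dist_lt_or_swap_of_adj hx hy hx' hy' with hlt | ⟨rfl, rfl⟩
    · omega
    · exact Sym2.eq_swap

end SimpleGraph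

theorem stmt18_general {V : Type*} (T : SimpleGraph V) (hT : T.IsTree)
    (k : ℕ) (hk : 1 ≤ k) (x y a b x' y' a' b' : V)
    (hxy : T.dist x y = k) (hab : T.dist a b = k)
    (hx : T.Adj x x') (hx' : T.dist x' y = k - 1)
    (hy : T.Adj y y') (hy' : T.dist y' x = k - 1)
    (ha' : T.dist a' b = k - 1)
    (hb' : T.dist b' a = k - 1)
    (h : s(s(x, x'), s(y, y')) = s(s(a, a'), s(b, b'))) :
    s(x, y) = s(a, b) := by
  rw [dist_comm] at hy'
  rcases Sym2.eq_iff.mp h with ⟨hxa, hyb⟩ | ⟨hxb, hya⟩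
  · exact hT.isAcyclic.eq_of_end_edges_eq hx hy (by omega) (by omega) (by omega) (by omega) hxa hyb
  · rw [dist_comm] at hab
    rw [hT.isAcyclic.eq_of_end_edges_eq hx hy (by omega) (by omega) (by omega) (by omega) hxb hya,
      Sym2.eq_swap]

/-- Injectivity of the map `F({x,y}) = {e_x, e_y}` sending a pair of
vertices at distance `k ≥ 1` to the pair of end edges of the path between them:
equal images force equal vertex pairs. -/
theorem stmt18 {V : Type*} (T : SimpleGraph V) (hT : T.IsTree)
    (k : ℕ) (hk : 1 ≤ k) (x y a b x' y' a' b' : V)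
    (hxy : T.dist x y = k) (hab : T.dist a b = k)
    (hx : T.Adj x x') (hx' : T.dist x' y = k - 1)
    (hy : T.Adj y y') (hy' : T.dist y' x = k - 1)
    (ha : T.Adj a a') (ha' : T.dist a' b = k - 1)
    (hb : T.Adj b b') (hb' : T.dist b' a = k - 1)
    (h : s(s(x, x'), s(y, y')) = s(s(a, a'), s(b, b'))) :
    s(x, y) = s(a, b) :=
  stmt18_general T hT k hk x y a b x' y' a' b' hxy hab hx hx' hy hy' ha' hb' h
end
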